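/- There exists a constant c_d > 0 depending only on the dimension d with the following property. Let E ∈ ℝ, ε > 0, γ > 0 with 2·c_d·γ ≤ ε, let u ∈ [−1,1]^Λ, and let Λ' ⊆ Λ be a set of positions such that every x ∈ Λ' satisfies both |√(u_x²+1) − E| ≥ ε and |√(u_x²+1) + E| ≥ ε; set R = Λ ∖ Λ'. Let D be the restriction of H(u) to the sites Λ' × {1,2}, let B be the block of H(u) with rows indexed by R × {1,2} and columns by Λ' × {1,2}, and let C = Bᵀ. Then for every λ ∈ ℝ with |λ − E| ≤ ε/2 and all positions x, y ∈ R, the 2×2 block of B(D − λ·I)⁻¹C between x and y has operator norm at most (c_d·γ/ε)^{max(|x−y|, 2)}·ε. -/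

import Mathlib

open Matrix

/-- The ℓ¹ distance `|x-y| = Σᵢ |xᵢ-yᵢ|` on `ℤ^d`, as a natural number. -/
def dist1 {d : ℕ} (x y : Fin d → ℤ) : ℕ := ∑ i, (x i - y i).natAbs

/-- The random block Hamiltonian: diagonal 2×2 block `[[u_x,1],[1,-u_x]]` at each
position `x ∈ Λ`, and block `γ·I₂` between nearest-neighbor positions. -/
noncomputable def Ham (d : ℕ) (γ : ℝ) (Λ : Finset (Fin d → ℤ)) (u : {x // x ∈ Λ} → ℝ) :
    Matrix ({x // x ∈ Λ} × Fin 2) ({x // x ∈ Λ} × Fin 2) ℝ := fun s t =>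
  if s.1 = t.1 then
    (if s.2 = t.2 then (if s.2 = 0 then u s.1 else -u s.1) else 1)
  else if dist1 (s.1 : Fin d → ℤ) (t.1 : Fin d → ℤ) = 1 then
    (if s.2 = t.2 then γ else 0)
  else 0

/-- The operator norm of a real matrix acting between Euclidean spaces. -/
noncomputable def opNorm {m n : Type*} [Fintype m] [Fintype n] [DecidableEq n]
    (M : Matrix m n ℝ) : ℝ :=
  ‖LinearMap.toContinuousLinearMap (Matrix.toEuclideanLin M)‖

/-- The 2×2 block of a site-indexed matrix between positions `x` and `y`. -/
def blk {α β : Type*} (M : Matrix (α × Fin 2) (β × Fin 2) ℝ) (x : α) (y : β) :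
    Matrix (Fin 2) (Fin 2) ℝ := fun i j => M (x, i) (y, j)

/-- Restriction `D` of `H(u)` to the sites over `Λ' ⊆ Λ`. -/
noncomputable def Dmat (d : ℕ) (γ : ℝ) (Λ Λ' : Finset (Fin d → ℤ)) (hsub : Λ' ⊆ Λ)
    (u : {x // x ∈ Λ} → ℝ) :
    Matrix ({x // x ∈ Λ'} × Fin 2) ({x // x ∈ Λ'} × Fin 2) ℝ :=
  (Ham d γ Λ u).submatrix
    (fun s => ((⟨s.1.1, hsub s.1.2⟩ : {x // x ∈ Λ}), s.2))
    (fun s => ((⟨s.1.1, hsub s.1.2⟩ : {x // x ∈ Λ}), s.2))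

/-- The block `B` of `H(u)` with rows indexed by the sites over `R = Λ \ Λ'` and
columns by the sites over `Λ'`. -/
noncomputable def Bmat (d : ℕ) (γ : ℝ) (Λ Λ' : Finset (Fin d → ℤ)) (hsub : Λ' ⊆ Λ)
    (u : {x // x ∈ Λ} → ℝ) :
    Matrix ({x // x ∈ Λ \ Λ'} × Fin 2) ({x // x ∈ Λ'} × Fin 2) ℝ :=
  (Ham d γ Λ u).submatrix
    (fun s => ((⟨s.1.1, (Finset.mem_sdiff.mp s.1.2).1⟩ : {x // x ∈ Λ}), s.2))
    (fun s => ((⟨s.1.1, hsub s.1.2⟩ : {x // x ∈ Λ}), s.2))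

/-!
Write `D - λ = A + γ T`, where `A` is block diagonal with the on-site blocks `h_z - λ` and
`T` is the nearest-neighbour hopping. The eigenvalues of `h_z` are `±√(u_z² + 1)`, so
nonresonance bounds the entries of `(h_z - λ)⁻¹` by `2/ε`, and `S = γ A⁻¹ T` has `ℓ^∞` operator
norm at most `8dγ/ε ≤ 1/2`. Hence `A⁻¹ (D - λ) = 1 + S`, `D - λ` is invertible and
`‖(D - λ)⁻¹‖ ≤ 8/ε`. Since `S` only connects neighbours, in the Neumann expansion
`(D - λ)⁻¹ = ∑ₙ (-S)ⁿ A⁻¹` the terms with `n < |s - t|` vanish at `(s, t)`, which gives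
`|(D - λ)⁻¹ₛₜ| ≤ (8/ε) (8dγ/ε)^|s - t|`. Finally `B` couples each `x ∈ R` with weight `γ` to its
at most `2d` neighbours in `Λ'`, and neighbours `s` of `x` and `t` of `y` satisfy
`|s - t| ≥ |x - y| - 2`: the two extra factors `2dγ` supply the remaining powers of `8dγ/ε`.
-/

theorem dist1_self {d : ℕ} (x : Fin d → ℤ) : dist1 x x = 0 := by simp [dist1]

theorem dist1_comm {d : ℕ} (x y : Fin d → ℤ) : dist1 x y = dist1 y x := by
  simp only [dist1, ← Int.natAbs_neg (x _ - y _), neg_sub]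

theorem dist1_triangle {d : ℕ} (x y z : Fin d → ℤ) : dist1 x z ≤ dist1 x y + dist1 y z := by
  rw [dist1, dist1, dist1, ← Finset.sum_add_distrib]
  gcongr with i
  simpa using Int.natAbs_add_le (x i - y i) (y i - z i)

theorem exists_eq_add_single_of_dist1_eq_one {d : ℕ} {x z : Fin d → ℤ} (h : dist1 x z = 1) :
    ∃ i, ∃ e ∈ ({1, -1} : Finset ℤ), z = x + Pi.single i e := by
  obtain ⟨i, hi⟩ := (Finsupp.sum_eq_one_iff
    (Finsupp.equivFunOnFinite.symm fun j => (z j - x j).natAbs)).mp <| by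
      rw [Finsupp.equivFunOnFinite_symm_sum]; exact (dist1_comm z x).trans h
  have hcoord j : (z j - x j).natAbs = if j = i then 1 else 0 := by
    simpa [Finsupp.single_apply, eq_comm] using DFunLike.congr_fun hi j
  refine ⟨i, z i - x i, ?_, funext fun j => ?_⟩
  · have := hcoord i
    simp only at this
    rcases Int.natAbs_eq_iff.mp this with h | h <;> simp [h]
  · by_cases hj : j = i
    · subst hj; simp
    · have := hcoord j
      simp only [if_neg hj, Int.natAbs_eq_zero, sub_eq_zero] at this
      simp [hj, this]

theorem card_filter_dist1_eq_one_le {d : ℕ} (x : Fin d → ℤ) (F : Finset (Fin d → ℤ)) :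
    (F.filter fun z => dist1 x z = 1).card ≤ 2 * d := by
  calc (F.filter fun z => dist1 x z = 1).card
      ≤ ((Finset.univ ×ˢ ({1, -1} : Finset ℤ)).image
          fun p => x + Pi.single p.1 p.2).card := by
        refine Finset.card_le_card fun z hz => ?_
        obtain ⟨i, e, he, rfl⟩ :=
          exists_eq_add_single_of_dist1_eq_one (Finset.mem_filter.mp hz).2
        exact Finset.mem_image.mpr ⟨(i, e), by simpa using he, rfl⟩
    _ ≤ 2 * d := Finset.card_image_le.trans (by simp [mul_comm])

theorem sum_ite_dist1_eq_one_le {d : ℕ} {F : Finset (Fin d → ℤ)} (x : Fin d → ℤ) {a : ℝ}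
    (ha : 0 ≤ a) : ∑ z : {z // z ∈ F}, (if dist1 x z = 1 then a else 0) ≤ 2 * d * a := by
  rw [Finset.sum_coe_sort F (fun z => if dist1 x z = 1 then a else 0), ← Finset.sum_filter,
    Finset.sum_const, nsmul_eq_mul]
  gcongr
  exact_mod_cast card_filter_dist1_eq_one_le x F

namespace Matrix

variable {ι : Type*} (δ : ι → ι → ℕ)

def IsBanded {R : Type*} [Zero R] (k : ℕ) (X : Matrix ι ι R) : Prop :=
  ∀ s t, k < δ s t → X s t = 0

variable {δ}

theorem IsBanded.neg {R : Type*} [NegZeroClass R] {k : ℕ} {X : Matrix ι ι R}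
    (hX : IsBanded δ k X) : IsBanded δ k (-X) := fun s t hst => by
  simp [hX s t hst]

variable [Fintype ι]

theorem IsBanded.mul {R : Type*} [NonUnitalNonAssocSemiring R]
    (hδ : ∀ a b c, δ a c ≤ δ a b + δ b c) {k l : ℕ} {X Y : Matrix ι ι R}
    (hX : IsBanded δ k X) (hY : IsBanded δ l Y) : IsBanded δ (k + l) (X * Y) := by
  intro s t hst
  refine Finset.sum_eq_zero fun w _ => show X s w * Y w t = 0 from ?_
  by_cases hsw : k < δ s w
  · rw [hX s w hsw, zero_mul]
  · rw [hY w t (by linarith [hδ s w t]), mul_zero]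

theorem IsBanded.pow_mul {R : Type*} [Semiring R] [DecidableEq ι]
    (hδ : ∀ a b c, δ a c ≤ δ a b + δ b c) {k l : ℕ} {X Y : Matrix ι ι R}
    (hX : IsBanded δ k X) (hY : IsBanded δ l Y) (n : ℕ) :
    IsBanded δ (n * k + l) (X ^ n * Y) := by
  induction n with
  | zero => simpa using hY
  | succ n ih =>
    rw [pow_succ', mul_assoc]
    convert hX.mul hδ ih using 1
    ring

theorem abs_mul_mul_transpose_apply_le {m n m' n' : Type*} [Fintype n] [Fintype n']
    (A : Matrix m n ℝ) (X : Matrix n n' ℝ) (B : Matrix m' n' ℝ) (a : m) (b : m') {K : ℝ}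
    (hK : ∀ s t, A a s ≠ 0 → B b t ≠ 0 → |X s t| ≤ K) :
    |(A * X * Bᵀ) a b| ≤ (∑ s, |A a s|) * K * ∑ t, |B b t| := by
  calc |(A * X * Bᵀ) a b| = |∑ t, ∑ s, A a s * X s t * B b t| := by
        simp [mul_apply, Finset.sum_mul]
    _ ≤ ∑ t, ∑ s, |A a s| * K * |B b t| := by
        refine (Finset.abs_sum_le_sum_abs _ _).trans <| Finset.sum_le_sum fun t _ =>
          (Finset.abs_sum_le_sum_abs _ _).trans <| Finset.sum_le_sum fun s _ => ?_
        rw [abs_mul, abs_mul]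
        by_cases hs : A a s = 0
        · simp [hs]
        by_cases ht : B b t = 0
        · simp [ht]
        gcongr
        exact hK s t hs ht
    _ = (∑ s, |A a s|) * K * ∑ t, |B b t| := by
        simp only [Finset.sum_mul, Finset.mul_sum]

section LinftyOpNorm

open scoped Norms.Operator

variable {m n : Type*} [Fintype n]

theorem sum_abs_apply_le_linfty_opNorm [Fintype m] (X : Matrix m n ℝ) (i : m) :
    ∑ j, |X i j| ≤ ‖X‖ := by
  rw [linfty_opNorm_def]
  have : ∑ j, ‖X i j‖₊ ≤ Finset.univ.sup fun i => ∑ j, ‖X i j‖₊ :=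
    Finset.le_sup (f := fun i => ∑ j, ‖X i j‖₊) (Finset.mem_univ i)
  simpa [Real.norm_eq_abs] using NNReal.coe_le_coe.mpr this

theorem abs_apply_le_linfty_opNorm [Fintype m] (X : Matrix m n ℝ) (i : m) (j : n) :
    |X i j| ≤ ‖X‖ :=
  (Finset.single_le_sum (fun j _ => abs_nonneg (X i j)) (Finset.mem_univ j)).trans
    (sum_abs_apply_le_linfty_opNorm X i)

theorem linfty_opNorm_le_of_sum_abs_le [Fintype m] {X : Matrix m n ℝ} {C : ℝ} (hC : 0 ≤ C)
    (h : ∀ i, ∑ j, |X i j| ≤ C) : ‖X‖ ≤ C := by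
  rw [linfty_opNorm_def, ← NNReal.coe_mk C hC, NNReal.coe_le_coe]
  refine Finset.sup_le fun i _ => ?_
  rw [← NNReal.coe_le_coe]
  simpa [Real.norm_eq_abs] using h i

theorem linfty_opNorm_le_of_forall_abs_le [Fintype m] {X : Matrix m n ℝ} {K : ℝ} (hK : 0 ≤ K)
    (h : ∀ i j, |X i j| ≤ K) : ‖X‖ ≤ Fintype.card n * K :=
  linfty_opNorm_le_of_sum_abs_le (by positivity) fun i =>
    (Finset.sum_le_sum fun j _ => h i j).trans (by simp)

theorem linfty_opNorm_comp_le {I J K L : Type*} [Fintype I] [Fintype J] [Fintype K]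
    [Fintype L] (X : Matrix I J (Matrix K L ℝ)) {C : ℝ} (hC : 0 ≤ C) (h : ∀ i, ∑ j, ‖X i j‖ ≤ C) :
    ‖comp I J K L ℝ X‖ ≤ C := by
  refine linfty_opNorm_le_of_sum_abs_le hC fun ⟨i, k⟩ => ?_
  rw [Fintype.sum_prod_type]
  exact (Finset.sum_le_sum fun j _ => sum_abs_apply_le_linfty_opNorm (X i j) k).trans (h i)

variable [DecidableEq ι] {M P S : Matrix ι ι ℝ}

theorem isUnit_det_of_mul_eq_one_add (hPM : P * M = 1 + S) (hS : ‖S‖ < 1) :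
    IsUnit M.det := by
  let u := Units.oneSub (-S) (by rwa [norm_neg])
  refine isUnit_det_of_left_inverse (B := (↑u⁻¹ : Matrix ι ι ℝ) * P) ?_
  rw [mul_assoc, hPM, show 1 + S = (u : Matrix ι ι ℝ) by simp [u, sub_neg_eq_add]]
  exact u.inv_mul

theorem norm_inv_le_of_mul_eq_one_add (hM : IsUnit M.det) (hPM : P * M = 1 + S)
    (hS : ‖S‖ < 1) : ‖M⁻¹‖ ≤ ‖P‖ / (1 - ‖S‖) := by
  have hinv : M⁻¹ = P - S * M⁻¹ := by
    rw [eq_sub_iff_add_eq, ← one_add_mul, ← hPM, mul_assoc, mul_nonsing_inv _ hM, mul_one]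
  have hle : ‖M⁻¹‖ ≤ ‖P‖ + ‖S‖ * ‖M⁻¹‖ := calc
    ‖M⁻¹‖ = ‖P - S * M⁻¹‖ := congrArg norm hinv
    _ ≤ ‖P‖ + ‖S‖ * ‖M⁻¹‖ := (norm_sub_le _ _).trans (by gcongr; exact norm_mul_le _ _)
  rw [le_div_iff₀ (by linarith)]
  linarith

theorem abs_inv_apply_le_of_isBanded (hδ : ∀ a b c, δ a c ≤ δ a b + δ b c)
    (hM : IsUnit M.det) (hPM : P * M = 1 + S) (hP : IsBanded δ 0 P) (hS : IsBanded δ 1 S)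
    (s t : ι) : |M⁻¹ s t| ≤ ‖S‖ ^ δ s t * ‖M⁻¹‖ := by
  set N := δ s t
  -- Truncate the Neumann series after `N` terms: by bandedness none of them reaches `(s, t)`.
  have hsplit : M⁻¹ = (∑ n ∈ Finset.range N, (-S) ^ n) * P + (-S) ^ N * M⁻¹ := by
    have hP' : P = (1 - -S) * M⁻¹ := by
      rw [sub_neg_eq_add, ← hPM, mul_assoc, mul_nonsing_inv _ hM, mul_one]
    rw [hP', ← mul_assoc, geom_sum_mul_neg, sub_mul, one_mul, sub_add_cancel]
  have hnear : ((∑ n ∈ Finset.range N, (-S) ^ n) * P) s t = 0 := by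
    rw [Finset.sum_mul, sum_apply]
    refine Finset.sum_eq_zero fun n hn => hS.neg.pow_mul hδ hP n s t ?_
    simpa using Finset.mem_range.mp hn
  calc |M⁻¹ s t| = |((-S) ^ N * M⁻¹) s t| := by
        conv_lhs => rw [hsplit, add_apply, hnear, zero_add]
    _ ≤ ‖(-S) ^ N * M⁻¹‖ := abs_apply_le_linfty_opNorm _ s t
    _ ≤ ‖S‖ ^ N * ‖M⁻¹‖ := by
        rcases N.eq_zero_or_pos with hN | hN
        · simp [hN]
        · refine (norm_mul_le _ _).trans ?_
          gcongr
          simpa using norm_pow_le' (-S) hN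

end LinftyOpNorm

end Matrix

section Frobenius

open scoped Matrix.Norms.Frobenius

variable {m n : Type*} [Fintype m] [Fintype n] [DecidableEq n]

theorem opNorm_le_frobenius_norm (M : Matrix m n ℝ) : opNorm M ≤ ‖M‖ := by
  refine ContinuousLinearMap.opNorm_le_bound _ (norm_nonneg _) fun v => ?_
  have h := Matrix.frobenius_norm_mul M (Matrix.replicateCol Unit (WithLp.ofLp v))
  rw [← Matrix.replicateCol_mulVec, Matrix.frobenius_norm_replicateCol,
    Matrix.frobenius_norm_replicateCol] at h
  simpa [Matrix.toLpLin_apply] using h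

theorem opNorm_le_of_forall_abs_le (M : Matrix m n ℝ) {K : ℝ} (hK : 0 ≤ K)
    (h : ∀ i j, |M i j| ≤ K) : opNorm M ≤ √(Fintype.card m * Fintype.card n) * K := by
  refine (opNorm_le_frobenius_norm M).trans ?_
  rw [Matrix.frobenius_norm_def, ← Real.sqrt_eq_rpow, ← Real.sqrt_sq hK, ← Real.sqrt_mul
    (by positivity)]
  gcongr
  calc ∑ i, ∑ j, ‖M i j‖ ^ (2 : ℝ) ≤ ∑ _i : m, ∑ _j : n, K ^ 2 := by
        gcongr with i _ j _
        rw [Real.rpow_two, Real.norm_eq_abs]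
        exact pow_le_pow_left₀ (abs_nonneg _) (h i j) 2
    _ = _ := by simp [mul_assoc]

end Frobenius

def siteBlock (a : ℝ) : Matrix (Fin 2) (Fin 2) ℝ := !![a, 1; 1, -a]

theorem det_siteBlock_sub_smul (a lam : ℝ) :
    (siteBlock a - lam • 1).det = -((√(a ^ 2 + 1) - lam) * (√(a ^ 2 + 1) + lam)) := by
  have hσsq : √(a ^ 2 + 1) ^ 2 = a ^ 2 + 1 := Real.sq_sqrt (by positivity)
  rw [Matrix.det_fin_two]
  simp [siteBlock]
  linear_combination hσsq

theorem abs_inv_siteBlock_sub_smul_apply_le (a lam : ℝ) {ρ : ℝ} (hρ : 0 < ρ)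
    (h₁ : ρ ≤ |√(a ^ 2 + 1) - lam|) (h₂ : ρ ≤ |√(a ^ 2 + 1) + lam|) (i j : Fin 2) :
    |(siteBlock a - lam • 1)⁻¹ i j| ≤ ρ⁻¹ := by
  set σ := √(a ^ 2 + 1)
  have hσ : 0 ≤ σ := Real.sqrt_nonneg _
  have ha : |a| ≤ σ := Real.abs_le_sqrt (by linarith)
  have hone : 1 ≤ σ := Real.one_le_sqrt.mpr (by nlinarith)
  have hkey : (σ + |lam|) * ρ ≤ |(siteBlock a - lam • 1).det| := by
    rw [det_siteBlock_sub_smul, abs_neg, abs_mul]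
    rcases le_total 0 lam with hlam | hlam
    · rw [abs_of_nonneg hlam, abs_of_nonneg (by linarith : 0 ≤ σ + lam)]
      nlinarith
    · rw [abs_of_nonpos hlam, abs_of_nonneg (by linarith : 0 ≤ σ - lam)]
      nlinarith
  set Δ := (siteBlock a - lam • 1).det
  have hΔpos : 0 < |Δ| := lt_of_lt_of_le (by positivity) hkey
  -- The adjugate entries are at most `σ + |λ| = max |σ ∓ λ|`, while `|det| = |σ - λ| |σ + λ|`.
  have hentry : ∀ e : ℝ, |e| ≤ σ + |lam| → |Δ⁻¹ * e| ≤ ρ⁻¹ := fun e he => by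
    rw [abs_mul, abs_inv, inv_mul_le_iff₀ hΔpos, ← div_eq_mul_inv, le_div_iff₀ hρ]
    nlinarith
  rw [Matrix.inv_def, Ring.inverse_eq_inv', Matrix.adjugate_fin_two]
  fin_cases i <;> fin_cases j <;> refine hentry _ ?_ <;> simp [siteBlock] <;>
    linarith [abs_sub (-a) lam, abs_sub a lam, abs_neg a, abs_nonneg lam]

section Model

open scoped Matrix.Norms.Operator

variable {d : ℕ} {Λ Λ' : Finset (Fin d → ℤ)} (hsub : Λ' ⊆ Λ) (u : {x // x ∈ Λ} → ℝ)

theorem blk_Dmat_sub_smul {γ : ℝ} (lam : ℝ) (z w : {x // x ∈ Λ'}) :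
    blk (Dmat d γ Λ Λ' hsub u - lam • 1) z w =
      if z = w then siteBlock (u ⟨z, hsub z.2⟩) - lam • 1
      else if dist1 (z : Fin d → ℤ) w = 1 then γ • 1 else 0 := by
  ext i j
  by_cases hzw : z = w
  · subst hzw
    fin_cases i <;> fin_cases j <;> simp [blk, Dmat, Ham, siteBlock]
  · have hzw' : (z : Fin d → ℤ) ≠ w := fun h => hzw (Subtype.ext h)
    by_cases hdist : dist1 (z : Fin d → ℤ) w = 1 <;>
      simp [blk, Dmat, Ham, hzw, hzw', hdist, Matrix.one_apply]

theorem Bmat_apply {γ : ℝ} (x : {x // x ∈ Λ \ Λ'}) (i : Fin 2) (z : {x // x ∈ Λ'})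
    (k : Fin 2) :
    Bmat d γ Λ Λ' hsub u (x, i) (z, k) =
      if dist1 (x : Fin d → ℤ) z = 1 ∧ i = k then γ else 0 := by
  have hxz : (x : Fin d → ℤ) ≠ z := fun h => (Finset.mem_sdiff.mp x.2).2 (h ▸ z.2)
  by_cases hdist : dist1 (x : Fin d → ℤ) z = 1 <;>
    simp [Bmat, Ham, hxz, hdist]

noncomputable def siteResolvent (lam : ℝ) (z : {x // x ∈ Λ'}) : Matrix (Fin 2) (Fin 2) ℝ :=
  (siteBlock (u ⟨z, hsub z.2⟩) - lam • 1)⁻¹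

-- `A⁻¹` and `S = γ A⁻¹ T` of the proof sketch, assembled from 2×2 blocks by `Matrix.comp`.
noncomputable def onsiteInv (lam : ℝ) :
    Matrix ({x // x ∈ Λ'} × Fin 2) ({x // x ∈ Λ'} × Fin 2) ℝ :=
  Matrix.comp _ _ _ _ ℝ (Matrix.diagonal (siteResolvent hsub u lam))

noncomputable def onsiteInvMulHopping (γ lam : ℝ) :
    Matrix ({x // x ∈ Λ'} × Fin 2) ({x // x ∈ Λ'} × Fin 2) ℝ :=
  Matrix.comp _ _ _ _ ℝ <| Matrix.of fun z w =>
    if dist1 (z : Fin d → ℤ) w = 1 then γ • siteResolvent hsub u lam z else 0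

theorem onsiteInv_mul_Dmat_sub_smul {γ lam : ℝ}
    (hdet : ∀ z : {x // x ∈ Λ'}, IsUnit (siteBlock (u ⟨z, hsub z.2⟩) - lam • 1).det) :
    onsiteInv hsub u lam * (Dmat d γ Λ Λ' hsub u - lam • 1) =
      1 + onsiteInvMulHopping hsub u γ lam := by
  apply (Matrix.compRingEquiv _ _ ℝ).symm.injective
  rw [map_mul, map_add, map_one]
  funext z w
  simp only [Matrix.compRingEquiv_symm_apply, onsiteInv, onsiteInvMulHopping,
    Equiv.symm_apply_apply, Matrix.diagonal_mul, Matrix.add_apply, Matrix.of_apply]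
  change siteResolvent hsub u lam z * blk (Dmat d γ Λ Λ' hsub u - lam • 1) z w = _
  rw [blk_Dmat_sub_smul]
  by_cases hzw : z = w
  · subst hzw
    simp [siteResolvent, Matrix.nonsing_inv_mul _ (hdet z), dist1_self]
  · by_cases hdist : dist1 (z : Fin d → ℤ) w = 1 <;> simp [hzw, hdist]

theorem norm_onsiteInv_le {lam K : ℝ} (hK : 0 ≤ K)
    (h : ∀ z i j, |siteResolvent hsub u lam z i j| ≤ K) :
    ‖onsiteInv hsub u lam‖ ≤ 2 * K := by
  refine Matrix.linfty_opNorm_comp_le _ (by positivity) fun z => ?_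
  rw [Finset.sum_eq_single z (fun w _ hwz => by simp [Ne.symm hwz]) (by simp)]
  simpa using Matrix.linfty_opNorm_le_of_forall_abs_le hK (h z)

theorem norm_onsiteInvMulHopping_le {γ lam K : ℝ} (hγ : 0 ≤ γ) (hK : 0 ≤ K)
    (h : ∀ z i j, |siteResolvent hsub u lam z i j| ≤ K) :
    ‖onsiteInvMulHopping hsub u γ lam‖ ≤ 2 * d * (γ * (2 * K)) := by
  refine Matrix.linfty_opNorm_comp_le _ (by positivity) fun z => ?_
  refine (Finset.sum_le_sum fun w _ => ?_).trans (sum_ite_dist1_eq_one_le (z : Fin d → ℤ)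
    (by positivity : 0 ≤ γ * (2 * K)))
  by_cases hzw : dist1 (z : Fin d → ℤ) w = 1
  · simpa [hzw, norm_smul, abs_of_nonneg hγ] using mul_le_mul_of_nonneg_left
      (by simpa using Matrix.linfty_opNorm_le_of_forall_abs_le hK (h z)) hγ
  · simp [hzw]

theorem isBanded_onsiteInv {lam : ℝ} :
    Matrix.IsBanded (fun s t => dist1 (s.1 : Fin d → ℤ) t.1) 0 (onsiteInv hsub u lam) := by
  rintro ⟨z, i⟩ ⟨w, j⟩ hzw
  have : z ≠ w := by rintro rfl; simp [dist1_self] at hzw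
  simp [onsiteInv, this]

theorem isBanded_onsiteInvMulHopping {γ lam : ℝ} :
    Matrix.IsBanded (fun s t => dist1 (s.1 : Fin d → ℤ) t.1) 1
      (onsiteInvMulHopping hsub u γ lam) := by
  rintro ⟨z, i⟩ ⟨w, j⟩ hzw
  simp [onsiteInvMulHopping, hzw.ne']

theorem abs_inv_Dmat_sub_smul_apply_le {γ lam ρ : ℝ} (hγ : 0 ≤ γ) (hρ : 0 < ρ)
    (hres : ∀ z : {x // x ∈ Λ'}, ρ ≤ |√(u ⟨z, hsub z.2⟩ ^ 2 + 1) - lam| ∧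
      ρ ≤ |√(u ⟨z, hsub z.2⟩ ^ 2 + 1) + lam|)
    (hγρ : 8 * d * γ ≤ ρ) (s t : {x // x ∈ Λ'} × Fin 2) :
    |(Dmat d γ Λ Λ' hsub u - lam • 1)⁻¹ s t| ≤
      (4 * d * γ / ρ) ^ dist1 (s.1 : Fin d → ℤ) t.1 * (4 / ρ) := by
  have hR z i j : |siteResolvent hsub u lam z i j| ≤ ρ⁻¹ :=
    abs_inv_siteBlock_sub_smul_apply_le _ _ hρ (hres z).1 (hres z).2 i j
  have hdet (z : {x // x ∈ Λ'}) : IsUnit (siteBlock (u ⟨z, hsub z.2⟩) - lam • 1).det := by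
    rw [isUnit_iff_ne_zero, det_siteBlock_sub_smul, neg_ne_zero]
    exact mul_ne_zero (abs_pos.mp ((hres z).1.trans_lt' hρ))
      (abs_pos.mp ((hres z).2.trans_lt' hρ))
  have hPM := onsiteInv_mul_Dmat_sub_smul hsub u (γ := γ) hdet
  have hP : ‖onsiteInv hsub u lam‖ ≤ 2 / ρ := by
    simpa [div_eq_mul_inv] using norm_onsiteInv_le hsub u (inv_nonneg.mpr hρ.le) hR
  have hS : ‖onsiteInvMulHopping hsub u γ lam‖ ≤ 4 * d * γ / ρ := by
    convert norm_onsiteInvMulHopping_le hsub u hγ (inv_nonneg.mpr hρ.le) hR using 1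
    ring
  have hS_half : ‖onsiteInvMulHopping hsub u γ lam‖ ≤ 1 / 2 :=
    hS.trans (by rw [div_le_div_iff₀ hρ two_pos]; linarith)
  have hM := Matrix.isUnit_det_of_mul_eq_one_add hPM (by linarith)
  have hMinv : ‖(Dmat d γ Λ Λ' hsub u - lam • 1)⁻¹‖ ≤ 4 / ρ := by
    refine (Matrix.norm_inv_le_of_mul_eq_one_add hM hPM (by linarith)).trans ?_
    rw [div_le_div_iff₀ (by linarith) hρ]
    linarith [(le_div_iff₀ hρ).mp hP]
  refine (Matrix.abs_inv_apply_le_of_isBanded (δ := fun s t => dist1 (s.1 : Fin d → ℤ) t.1)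
    (fun _ _ _ => dist1_triangle _ _ _) hM hPM
    (isBanded_onsiteInv hsub u) (isBanded_onsiteInvMulHopping hsub u) s t).trans ?_
  gcongr

theorem sum_abs_Bmat_apply_le {γ : ℝ} (hγ : 0 ≤ γ) (x : {x // x ∈ Λ \ Λ'}) (i : Fin 2) :
    ∑ s, |Bmat d γ Λ Λ' hsub u (x, i) s| ≤ 2 * d * γ := by
  rw [Fintype.sum_prod_type]
  refine (Finset.sum_le_sum fun z _ => le_of_eq ?_).trans
    (sum_ite_dist1_eq_one_le (x : Fin d → ℤ) hγ)
  by_cases hxz : dist1 (x : Fin d → ℤ) z = 1 <;> fin_cases i <;>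
    simp [Bmat_apply, hxz, abs_of_nonneg hγ]

theorem abs_Bmat_mul_mul_transpose_apply_le {γ : ℝ} (hγ : 0 ≤ γ)
    (X : Matrix ({x // x ∈ Λ'} × Fin 2) ({x // x ∈ Λ'} × Fin 2) ℝ) {C r : ℝ} (hC : 0 ≤ C)
    (hr₀ : 0 ≤ r) (hr₁ : r ≤ 1) (hX : ∀ s t, |X s t| ≤ C * r ^ dist1 (s.1 : Fin d → ℤ) t.1)
    (x y : {x // x ∈ Λ \ Λ'}) (i j : Fin 2) :
    |(Bmat d γ Λ Λ' hsub u * X * (Bmat d γ Λ Λ' hsub u)ᵀ) (x, i) (y, j)| ≤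
      2 * d * γ * (C * r ^ (dist1 (x : Fin d → ℤ) y - 2)) * (2 * d * γ) := by
  have hadj (w : {x // x ∈ Λ \ Λ'}) (k : Fin 2) (s : {x // x ∈ Λ'} × Fin 2)
      (hs : Bmat d γ Λ Λ' hsub u (w, k) s ≠ 0) : dist1 (w : Fin d → ℤ) s.1 = 1 := by
    by_contra h
    exact hs (by rw [Bmat_apply]; simp [h])
  refine (Matrix.abs_mul_mul_transpose_apply_le _ X _ (x, i) (y, j)
    (K := C * r ^ (dist1 (x : Fin d → ℤ) y - 2)) fun s t hs ht => (hX s t).trans ?_).trans ?_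
  · have h₁ := dist1_triangle (x : Fin d → ℤ) s.1 y
    have h₂ := dist1_triangle (s.1 : Fin d → ℤ) t.1 y
    have h₃ := dist1_comm (y : Fin d → ℤ) t.1
    have := hadj x i s hs
    have := hadj y j t ht
    exact mul_le_mul_of_nonneg_left (pow_le_pow_of_le_one hr₀ hr₁ (by omega)) hC
  · gcongr
    · exact sum_abs_Bmat_apply_le hsub u hγ x i
    · exact sum_abs_Bmat_apply_le hsub u hγ y j

end Model

/-- there is `c_d > 0` such that if `2·c_d·γ ≤ ε` and all positions of
`Λ' ⊆ Λ` are `ε`-nonresonant with `E`, then for `|λ-E| ≤ ε/2` the 2×2 blocks of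
`B(D-λ·I)⁻¹C` (with `C = Bᵀ`) between positions `x, y ∈ R = Λ ∖ Λ'` are bounded by
`(c_d·γ/ε)^{max(|x-y|,2)}·ε`. -/
theorem schur_correction_block_decay (d : ℕ) (hd : 1 ≤ d) :
    ∃ c : ℝ, 0 < c ∧
      ∀ (γ E ε : ℝ), 0 < γ → 0 < ε → 2 * c * γ ≤ ε →
      ∀ (Λ : Finset (Fin d → ℤ)), (∃ a b, Λ = Finset.Icc a b) →
      ∀ (u : {x // x ∈ Λ} → ℝ), (∀ x, u x ∈ Set.Icc (-1 : ℝ) 1) →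
      ∀ (Λ' : Finset (Fin d → ℤ)) (hsub : Λ' ⊆ Λ),
      (∀ x : {x // x ∈ Λ'},
          ε ≤ |Real.sqrt (u ⟨x.1, hsub x.2⟩ ^ 2 + 1) - E| ∧
          ε ≤ |Real.sqrt (u ⟨x.1, hsub x.2⟩ ^ 2 + 1) + E|) →
      ∀ lam : ℝ, |lam - E| ≤ ε / 2 →
      ∀ x y : {x // x ∈ Λ \ Λ'},
        opNorm (blk (Bmat d γ Λ Λ' hsub u * (Dmat d γ Λ Λ' hsub u - lam • 1)⁻¹ *
            (Bmat d γ Λ Λ' hsub u)ᵀ) x y) ≤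
          (c * γ / ε) ^ max (dist1 (x : Fin d → ℤ) (y : Fin d → ℤ)) 2 * ε := by
  refine ⟨8 * d, by positivity, ?_⟩
  intro γ E ε hγ hε hcγ Λ _ u _ Λ' hsub hnr lam hlam x y
  have hres (z : {x // x ∈ Λ'}) : ε / 2 ≤ |√(u ⟨z, hsub z.2⟩ ^ 2 + 1) - lam| ∧
      ε / 2 ≤ |√(u ⟨z, hsub z.2⟩ ^ 2 + 1) + lam| := by
    constructor
    · linarith [(hnr z).1, abs_sub_le (√(u ⟨z, hsub z.2⟩ ^ 2 + 1)) lam E]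
    · have h := abs_add_le (√(u ⟨z, hsub z.2⟩ ^ 2 + 1) + lam) (E - lam)
      rw [add_add_sub_cancel] at h
      linarith [(hnr z).2, abs_sub_comm E lam]
  set r := 8 * d * γ / ε
  have hr₁ : r ≤ 1 := by rw [div_le_one hε]; nlinarith
  have hdecay (s t : {x // x ∈ Λ'} × Fin 2) :
      |(Dmat d γ Λ Λ' hsub u - lam • 1)⁻¹ s t| ≤
        8 / ε * r ^ dist1 (s.1 : Fin d → ℤ) t.1 := by
    convert abs_inv_Dmat_sub_smul_apply_le hsub u hγ.le (half_pos hε) hres (by linarith) s t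
      using 1
    field_simp
    ring
  refine (opNorm_le_of_forall_abs_le _ (by positivity) fun i j =>
    abs_Bmat_mul_mul_transpose_apply_le hsub u hγ.le _ (by positivity) (by positivity) hr₁
      hdecay x y i j).trans (le_of_eq ?_)
  rw [show max (dist1 (x : Fin d → ℤ) y) 2 = dist1 (x : Fin d → ℤ) y - 2 + 2 by omega,
    pow_add]
  simp only [Fintype.card_fin, Nat.cast_ofNat, Real.sqrt_mul_self zero_le_two, r]
  field_simp
  ring
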